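/- arXiv:2312.11773 — 5 statements merged into one kernel-verified Lean document; each statement's English description precedes it below -/
import Mathlib

section
/- Let V be a finite-dimensional complex normed vector space and let p be a nonzero complex polynomial on V in n complex variables. There exist constants c > 0 and m ≥ 0 (depending only on p) such that for every ρ > 0, every z₀ ∈ V, and every function h holomorphic on the closed polydisc Δ_ρ(z₀) = {z : ‖z − z₀‖ ≤ ρ} (with ‖z‖ = sup_j |z_j|), one has |h(z₀)| ≤ c ρ^{−m} sup_{z ∈ Δ_ρ(z₀)} |p(z) h(z)|. -/
/-!
Restrict `h` to the complex line `t ↦ z₀ + t • v`, where `v` lies in the unit polydisc and the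
top-degree homogeneous component `p_N` of `p` does not vanish at `v`. Then `t ↦ p (z₀ + t • v)` is a
polynomial of degree at most `N` whose coefficient of `t ^ N` is `p_N v`, independently of `z₀`.

For a polynomial `q` of degree at most `d` and `f` holomorphic on the closed disc of radius `r`, put
`Q t = ∑ k, conj (q_k) r ^ (2k) t ^ (d - k)`. On `‖t‖ = r` we have `conj t = r ^ 2 / t`, so
`Q t = t ^ d conj (q t)` and `‖Q t‖ = r ^ d ‖q t‖`, while `Q 0 = conj (q_d) r ^ (2d)`. The maximum
principle for `Q f` gives `‖q_d‖ r ^ d ‖f 0‖ ≤ sup_{‖t‖ = r} ‖q t f t‖`.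
-/

open scoped Polynomial ComplexConjugate
open Metric Finset

namespace Polynomial

def conjReflection (q : ℂ[X]) (d : ℕ) (r : ℝ) (t : ℂ) : ℂ :=
  ∑ k ∈ range (d + 1), conj (q.coeff k) * ((r : ℂ) ^ 2) ^ k * t ^ (d - k)

theorem differentiable_conjReflection (q : ℂ[X]) (d : ℕ) (r : ℝ) :
    Differentiable ℂ (conjReflection q d r) := by
  unfold conjReflection
  fun_prop

theorem conjReflection_zero (q : ℂ[X]) (d : ℕ) (r : ℝ) :
    conjReflection q d r 0 = conj (q.coeff d) * ((r : ℂ) ^ 2) ^ d := by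
  rw [conjReflection, sum_eq_single_of_mem d (self_mem_range_succ d) fun k hk hkd => ?_]
  · simp
  · rw [zero_pow (Nat.sub_ne_zero_of_lt ((mem_range_succ_iff.mp hk).lt_of_ne hkd)), mul_zero]

theorem conjReflection_of_norm_eq {q : ℂ[X]} {d : ℕ} (hd : q.natDegree ≤ d) {r : ℝ} {t : ℂ}
    (ht : ‖t‖ = r) : conjReflection q d r t = t ^ d * conj (q.eval t) := by
  rw [conjReflection, eval_eq_sum_range' (Nat.lt_succ_of_le hd), map_sum, mul_sum]
  refine sum_congr rfl fun k hk => ?_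
  rw [← ht, ← Complex.mul_conj', ← pow_sub_mul_pow t (mem_range_succ_iff.mp hk)]
  simp only [map_mul, map_pow]
  ring

theorem norm_coeff_mul_pow_mul_norm_le {q : ℂ[X]} {d : ℕ} (hd : q.natDegree ≤ d) {r : ℝ}
    (hr : 0 < r) {f : ℂ → ℂ} (hf : DiffContOnCl ℂ f (ball 0 r)) {B : ℝ}
    (hB : ∀ t ∈ sphere (0 : ℂ) r, ‖q.eval t * f t‖ ≤ B) :
    ‖q.coeff d‖ * r ^ d * ‖f 0‖ ≤ B := by
  have hmax : ‖conjReflection q d r 0 * f 0‖ ≤ r ^ d * B := by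
    refine Complex.norm_le_of_forall_mem_frontier_norm_le isBounded_ball
      ((differentiable_conjReflection q d r).diffContOnCl.smul hf) (fun t ht => ?_)
      (subset_closure (mem_ball_self hr))
    rw [frontier_ball 0 hr.ne', mem_sphere_zero_iff_norm] at ht
    rw [conjReflection_of_norm_eq hd ht, smul_eq_mul, norm_mul, norm_mul, norm_pow,
      Complex.norm_conj, ht, mul_assoc, ← norm_mul]
    exact mul_le_mul_of_nonneg_left (hB t (mem_sphere_zero_iff_norm.mpr ht)) (by positivity)
  rw [conjReflection_zero, norm_mul, norm_mul, norm_pow, norm_pow, Complex.norm_conj,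
    Complex.norm_real, Real.norm_of_nonneg hr.le] at hmax
  refine le_of_mul_le_mul_left ?_ (by positivity : 0 < r ^ d)
  calc r ^ d * (‖q.coeff d‖ * r ^ d * ‖f 0‖) = ‖q.coeff d‖ * (r ^ 2) ^ d * ‖f 0‖ := by ring
    _ ≤ r ^ d * B := hmax

variable {R : Type*} [CommSemiring R]

theorem coeff_prod_sum_of_natDegree_le {ι : Type*} (s : Finset ι) (f : ι → R[X]) (d : ι → ℕ)
    (h : ∀ i ∈ s, (f i).natDegree ≤ d i) :
    (∏ i ∈ s, f i).coeff (∑ i ∈ s, d i) = ∏ i ∈ s, (f i).coeff (d i) := by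
  classical
  induction s using Finset.induction_on with
  | empty => simp
  | insert a s has ih =>
    rw [Finset.forall_mem_insert] at h
    rw [Finset.prod_insert has, Finset.sum_insert has, Finset.prod_insert has,
      coeff_mul_add_eq_of_natDegree_le h.1
        ((natDegree_prod_le _ _).trans (Finset.sum_le_sum h.2)), ih h.2]

end Polynomial

namespace MvPolynomial

open Polynomial (natDegree_pow_le_of_le coeff_pow_of_natDegree_le)

variable {σ R : Type*} [CommSemiring R] {g : σ → R[X]}

theorem natDegree_aeval_monomial_le (hg : ∀ j, (g j).natDegree ≤ 1) (c : σ →₀ ℕ) (a : R) :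
    (aeval g (monomial c a)).natDegree ≤ c.degree := by
  rw [aeval_monomial, Finsupp.prod, Finsupp.degree_apply]
  refine (Polynomial.natDegree_mul_le).trans ?_
  rw [Polynomial.algebraMap_eq, Polynomial.natDegree_C, zero_add]
  refine (Polynomial.natDegree_prod_le _ _).trans (Finset.sum_le_sum fun j _ => ?_)
  simpa using natDegree_pow_le_of_le (c j) (hg j)

theorem coeff_degree_aeval_monomial (hg : ∀ j, (g j).natDegree ≤ 1) (c : σ →₀ ℕ) (a : R) :
    (aeval g (monomial c a)).coeff c.degree = eval (fun j => (g j).coeff 1) (monomial c a) := by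
  have hpow : ∀ j, (g j ^ c j).natDegree ≤ c j := fun j => by
    simpa using natDegree_pow_le_of_le (c j) (hg j)
  rw [aeval_monomial, eval_monomial, Finsupp.prod, Finsupp.prod, Finsupp.degree_apply,
    Polynomial.algebraMap_eq, Polynomial.coeff_C_mul,
    Polynomial.coeff_prod_sum_of_natDegree_le _ _ _ fun j _ => hpow j]
  congr 1
  refine Finset.prod_congr rfl fun j _ => ?_
  simpa using coeff_pow_of_natDegree_le (m := c j) (hg j)

theorem natDegree_aeval_le_totalDegree (hg : ∀ j, (g j).natDegree ≤ 1) (p : MvPolynomial σ R) :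
    (aeval g p).natDegree ≤ p.totalDegree := by
  conv_lhs => rw [p.as_sum, map_sum]
  exact Polynomial.natDegree_sum_le_of_forall_le _ _ fun c hc =>
    (natDegree_aeval_monomial_le hg c _).trans (le_totalDegree hc)

theorem coeff_totalDegree_aeval (hg : ∀ j, (g j).natDegree ≤ 1) (p : MvPolynomial σ R) :
    (aeval g p).coeff p.totalDegree =
      eval (fun j => (g j).coeff 1) (homogeneousComponent p.totalDegree p) := by
  nth_rw 1 [p.as_sum]
  rw [map_sum, Polynomial.finsetSum_coeff, homogeneousComponent_apply, map_sum, Finset.sum_filter]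
  refine Finset.sum_congr rfl fun c hc => ?_
  split_ifs with hdeg
  · rw [← hdeg, coeff_degree_aeval_monomial hg]
  · exact Polynomial.coeff_eq_zero_of_natDegree_lt <| (natDegree_aeval_monomial_le hg c _).trans_lt
      ((le_totalDegree hc).lt_of_ne hdeg)

theorem homogeneousComponent_totalDegree_ne_zero {p : MvPolynomial σ R} (hp : p ≠ 0) :
    homogeneousComponent p.totalDegree p ≠ 0 := by
  obtain ⟨c, hc, hdeg⟩ := p.support.exists_mem_eq_sup (support_nonempty.mpr hp) Finsupp.degree
  have htop : c.degree = p.totalDegree := hdeg.symm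
  refine ne_of_apply_ne (coeff c) ?_
  rw [coeff_homogeneousComponent, if_pos htop, coeff_zero]
  exact mem_support_iff.mp hc

theorem IsHomogeneous.eval_smul {q : MvPolynomial σ R} {n : ℕ} (hq : q.IsHomogeneous n) (a : R)
    (w : σ → R) : eval (a • w) q = a ^ n * eval w q := by
  rw [q.as_sum, map_sum, map_sum, Finset.mul_sum]
  refine Finset.sum_congr rfl fun c hc => ?_
  simp only [eval_monomial, Pi.smul_apply, smul_eq_mul, mul_pow, Finsupp.prod_mul]
  rw [Finsupp.prod, Finsupp.prod, Finset.prod_pow_eq_pow_sum, ← hq.degree_eq_sum_deg_support hc]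
  ring

theorem eval_aeval_line (z₀ v : σ → R) (p : MvPolynomial σ R) (t : R) :
    (aeval (fun j => Polynomial.C (v j) * Polynomial.X + Polynomial.C (z₀ j)) p).eval t =
      eval (z₀ + t • v) p := by
  induction p using MvPolynomial.induction_on with
  | C a => simp
  | add p q hp hq => simp [hp, hq]
  | mul_X p j hp =>
    simp only [map_mul, aeval_X, Polynomial.eval_mul, hp, Polynomial.eval_add, Polynomial.eval_C,
      Polynomial.eval_X, eval_X, Pi.add_apply, Pi.smul_apply, smul_eq_mul]
    ring

theorem IsHomogeneous.exists_norm_le_one_eval_ne_zero {𝕜 : Type*} [NontriviallyNormedField 𝕜]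
    [Fintype σ] {q : MvPolynomial σ 𝕜} {n : ℕ} (hq : q.IsHomogeneous n) (hq₀ : q ≠ 0) :
    ∃ v : σ → 𝕜, ‖v‖ ≤ 1 ∧ eval v q ≠ 0 := by
  obtain ⟨w, hw⟩ : ∃ w, eval w q ≠ 0 := by
    by_contra! h
    exact hq₀ (hq.eq_zero_of_forall_eval_eq_zero h)
  obtain ⟨a, ha₀, ha⟩ := NormedField.exists_norm_lt 𝕜 (inv_pos.mpr (by positivity : 0 < ‖w‖ + 1))
  refine ⟨a • w, ?_, ?_⟩
  · rw [norm_smul]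
    calc ‖a‖ * ‖w‖ ≤ (‖w‖ + 1)⁻¹ * (‖w‖ + 1) := by gcongr; linarith
      _ = 1 := inv_mul_cancel₀ (by positivity)
  · rw [hq.eval_smul]
    exact mul_ne_zero (pow_ne_zero _ (norm_pos_iff.mp ha₀)) hw

end MvPolynomial

open MvPolynomial in
/-- Ehrenpreis's division lemma. -/
theorem ehrenpreis_division (n : ℕ) (p : MvPolynomial (Fin n) ℂ) (hp : p ≠ 0) :
    ∃ (c : ℝ) (m : ℕ), 0 < c ∧
      ∀ (ρ : ℝ), 0 < ρ → ∀ (z₀ : Fin n → ℂ) (h : (Fin n → ℂ) → ℂ) (U : Set (Fin n → ℂ)),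
        IsOpen U → Metric.closedBall z₀ ρ ⊆ U → DifferentiableOn ℂ h U →
        ∀ B : ℝ, (∀ z ∈ Metric.closedBall z₀ ρ, ‖MvPolynomial.eval z p * h z‖ ≤ B) →
          ‖h z₀‖ ≤ c * ρ⁻¹ ^ m * B := by
  obtain ⟨v, hv, hpv⟩ :=
    (homogeneousComponent_isHomogeneous p.totalDegree p).exists_norm_le_one_eval_ne_zero
      (homogeneousComponent_totalDegree_ne_zero hp)
  refine ⟨‖eval v (homogeneousComponent p.totalDegree p)‖⁻¹, p.totalDegree, by positivity,
    fun ρ hρ z₀ h U _ hsub hh B hB => ?_⟩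
  have hline : Set.MapsTo (fun t : ℂ => z₀ + t • v) (closedBall 0 ρ) (closedBall z₀ ρ) :=
    fun t ht => by
      rw [mem_closedBall_zero_iff] at ht
      simpa [norm_smul] using mul_le_mul ht hv (norm_nonneg v) hρ.le
  let g : Fin n → ℂ[X] := fun j => Polynomial.C (v j) * Polynomial.X + Polynomial.C (z₀ j)
  have hg : ∀ j, (g j).natDegree ≤ 1 := fun j => Polynomial.natDegree_linear_le
  have hgv : (fun j => (g j).coeff 1) = v := by ext; simp [g]
  have hbound := Polynomial.norm_coeff_mul_pow_mul_norm_le (natDegree_aeval_le_totalDegree hg p) hρ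
    (f := fun t => h (z₀ + t • v)) (((hh.mono hsub).comp (by fun_prop) hline).diffContOnCl_ball
      subset_rfl) fun t ht => by
        rw [eval_aeval_line]
        exact hB _ (hline (sphere_subset_closedBall ht))
  rw [coeff_totalDegree_aeval hg, hgv, zero_smul, add_zero] at hbound
  rw [inv_pow, ← mul_inv, ← div_eq_inv_mul, le_div_iff₀ (by positivity)]
  linarith
end

section
/- Let W = {w₁, …, w_m} be a finite group acting linearly on a finite-dimensional complex vector space V, and let p₁, …, p_m be polynomials on V such that C[V] is a free C[V]^W-module with basis p₁,…,p_m. Then the polynomial D(λ) = det([pᵢ(w_j λ)]_{i,j}) is not identically zero. -/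
noncomputable section

open MvPolynomial in
private lemma eval_aeval' {n : ℕ} (f : Fin n → MvPolynomial (Fin n) ℂ)
    (q : MvPolynomial (Fin n) ℂ) (l : Fin n → ℂ) :
    eval l (aeval f q) = eval (fun k => eval l (f k)) q := by
  rw [aeval_def, algebraMap_eq]
  rw [show (eval l) (eval₂ C f q) = eval₂ ((eval l).comp C) ((eval l) ∘ f) q from
    eval₂_comp_left (eval l) C f q]
  have : (eval l).comp C = RingHom.id ℂ := by ext x; simp
  rw [this]
  rfl

/-- If `p₁, …, p_m` form a basis of `ℂ[V]` as a free module over the invariants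
`ℂ[V]^W`, then the determinant `D(λ) = det [pᵢ(wⱼ λ)]` is not identically zero. -/
theorem basis_determinant_ne_zero (n m : ℕ) (G : Type) [Group G] [Fintype G]
    (ρ : G →* ((Fin n → ℂ) ≃ₗ[ℂ] (Fin n → ℂ)))
    (w : Fin m ≃ G) (p : Fin m → MvPolynomial (Fin n) ℂ)
    (hbasis : ∀ f : MvPolynomial (Fin n) ℂ,
      ∃! F : Fin m → MvPolynomial (Fin n) ℂ,
        (∀ i, ∀ (g : G) (l : Fin n → ℂ),
          MvPolynomial.eval (ρ g l) (F i) = MvPolynomial.eval l (F i)) ∧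
        f = ∑ i, p i * F i) :
    ∃ l : Fin n → ℂ,
      (Matrix.of fun j i => MvPolynomial.eval (ρ (w j) l) (p i)).det ≠ 0 := by
  classical
  by_contra hcon
  push_neg at hcon
  -- substitution algebra endomorphisms
  set A : G → MvPolynomial (Fin n) ℂ → MvPolynomial (Fin n) ℂ := fun g =>
    MvPolynomial.aeval (fun k => ∑ i, MvPolynomial.C ((ρ g) (Pi.single i 1) k) *
      MvPolynomial.X i) with hAdef
  have key : ∀ (g : G) (l : Fin n → ℂ), ρ g⁻¹ (ρ g l) = l := by
    intro g l
    have : ρ g⁻¹ (ρ g l) = (ρ g⁻¹ * ρ g) l := rfl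
    rw [this, ← map_mul, inv_mul_cancel, map_one]
    rfl
  have hA : ∀ (g : G) (q : MvPolynomial (Fin n) ℂ) (l : Fin n → ℂ),
      MvPolynomial.eval l (A g q) = MvPolynomial.eval (ρ g l) q := by
    intro g q l
    have hsingle : ∀ i : Fin n, Pi.single i (l i) = l i • (Pi.single i 1 : Fin n → ℂ) := by
      intro i; funext j
      by_cases h : j = i <;> simp [Pi.single_apply, h]
    have hl : ρ g l = ∑ i, l i • (ρ g) (Pi.single i 1) := by
      conv_lhs => rw [show l = ∑ i, Pi.single i (l i) from (Finset.univ_sum_single l).symm]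
      rw [map_sum]
      exact Finset.sum_congr rfl fun i _ => by rw [hsingle i, map_smul]
    have hfun : (fun k => MvPolynomial.eval l
        (∑ i, MvPolynomial.C ((ρ g) (Pi.single i 1) k) * MvPolynomial.X i)) = ρ g l := by
      funext k
      simp only [map_sum, map_mul, MvPolynomial.eval_C, MvPolynomial.eval_X]
      rw [hl]
      simp [Finset.sum_apply, mul_comm]
    rw [hAdef, eval_aeval', hfun]
  -- the matrix of substituted polynomials
  set P : Matrix (Fin m) (Fin m) (MvPolynomial (Fin n) ℂ) :=
    Matrix.of fun j i => A (w j) (p i) with hPdef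
  have hPdet : P.det = 0 := by
    apply MvPolynomial.funext
    intro l
    rw [map_zero, RingHom.map_det, RingHom.mapMatrix_apply]
    have : P.map (MvPolynomial.eval l) =
        Matrix.of fun j i => MvPolynomial.eval (ρ (w j) l) (p i) := by
      ext j i
      simp [hPdef, Matrix.map_apply, hA]
    rw [this, hcon l]
  obtain ⟨c, hc0, hcP⟩ := Matrix.exists_mulVec_eq_zero_iff.mpr hPdet
  obtain ⟨i₀, hi₀⟩ := Function.ne_iff.mp hc0
  -- the pointwise linear relation
  have hrel : ∀ (g : G) (l : Fin n → ℂ),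
      ∑ i, MvPolynomial.eval l (p i) * MvPolynomial.eval (ρ g l) (c i) = 0 := by
    intro g l
    have h1 := congrFun hcP (w.symm g⁻¹)
    have h2 := congrArg (MvPolynomial.eval (ρ g l)) h1
    simp only [Matrix.mulVec, dotProduct, Pi.zero_apply, map_zero, map_sum,
      map_mul] at h2
    rw [← h2]
    refine Finset.sum_congr rfl fun i _ => ?_
    rw [hPdef]
    simp only [Matrix.of_apply, Equiv.apply_symm_apply, hA, key]
  set c₀ : MvPolynomial (Fin n) ℂ := c i₀ with hc₀def
  set r : MvPolynomial (Fin n) ℂ := ∏ g ∈ Finset.univ.erase (1 : G), A g c₀ with hrdef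
  set F : Fin m → MvPolynomial (Fin n) ℂ := fun i => ∑ g : G, A g (c i * r) with hFdef
  have hmul : ∀ (g h : G) (l : Fin n → ℂ), ρ g (ρ h l) = ρ (g * h) l := by
    intro g h l; rw [map_mul]; rfl
  -- invariance of F
  have hFinv : ∀ i (h : G) (l : Fin n → ℂ),
      MvPolynomial.eval (ρ h l) (F i) = MvPolynomial.eval l (F i) := by
    intro i h l
    rw [hFdef]
    simp only [map_sum, hA]
    refine Fintype.sum_equiv (Equiv.mulRight h) _ _ fun g => ?_
    simp only [hmul, Equiv.coe_mulRight]
  -- decomposition of 0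
  have hdecomp : (0 : MvPolynomial (Fin n) ℂ) = ∑ i, p i * F i := by
    apply MvPolynomial.funext
    intro l
    rw [map_zero, map_sum]
    simp only [map_mul, hFdef, map_sum, hA]
    have hswap : ∀ i : Fin m, MvPolynomial.eval l (p i) *
        ∑ g : G, MvPolynomial.eval (ρ g l) (c i) * MvPolynomial.eval (ρ g l) r =
        ∑ g : G, MvPolynomial.eval (ρ g l) r *
          (MvPolynomial.eval l (p i) * MvPolynomial.eval (ρ g l) (c i)) := by
      intro i
      rw [Finset.mul_sum]
      exact Finset.sum_congr rfl fun g _ => by ring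
    rw [Finset.sum_congr rfl fun i _ => hswap i, Finset.sum_comm]
    rw [show (0 : ℂ) = ∑ g : G, MvPolynomial.eval (ρ g l) r * 0 by simp]
    refine Finset.sum_congr rfl fun g _ => ?_
    rw [← Finset.mul_sum, hrel g l]
  obtain ⟨F', _, huniq⟩ := hbasis 0
  have hF0 : F = 0 := by
    have h1 := huniq F ⟨hFinv, hdecomp⟩
    have h2 := huniq 0 ⟨fun i g l => by simp, by simp⟩
    rw [h1, h2]
  -- compute eval of F i₀
  have hFi₀ : ∀ l : Fin n → ℂ,
      MvPolynomial.eval l (F i₀) =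
        (Fintype.card G : ℂ) * ∏ h : G, MvPolynomial.eval (ρ h l) c₀ := by
    intro l
    rw [hFdef]
    simp only [map_sum, hA, map_mul]
    have hterm : ∀ g : G,
        MvPolynomial.eval (ρ g l) c₀ * MvPolynomial.eval (ρ g l) r =
          ∏ h : G, MvPolynomial.eval (ρ h l) c₀ := by
      intro g
      rw [hrdef, map_prod]
      have : ∀ h : G, MvPolynomial.eval (ρ g l) (A h c₀) =
          MvPolynomial.eval (ρ (h * g) l) c₀ := fun h => by rw [hA, hmul]
      rw [Finset.prod_congr rfl fun h _ => this h]
      rw [show MvPolynomial.eval (ρ g l) c₀ = MvPolynomial.eval (ρ ((1 : G) * g) l) c₀ by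
        rw [one_mul]]
      rw [Finset.mul_prod_erase Finset.univ (fun h => MvPolynomial.eval (ρ (h * g) l) c₀)
        (Finset.mem_univ 1)]
      exact Fintype.prod_equiv (Equiv.mulRight g) _ _ fun h => rfl
    rw [Finset.sum_congr rfl fun g _ => hterm g]
    rw [Finset.sum_const, Finset.card_univ, nsmul_eq_mul]
  have hprod : ∀ l : Fin n → ℂ, ∏ h : G, MvPolynomial.eval (ρ h l) c₀ = 0 := by
    intro l
    have := hFi₀ l
    rw [hF0] at this
    simp only [Pi.zero_apply, map_zero] at this
    have hcard : (Fintype.card G : ℂ) ≠ 0 := by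
      exact_mod_cast Fintype.card_ne_zero
    exact (mul_eq_zero.mp this.symm).resolve_left hcard
  -- conclude c₀ = 0
  have hN : (∏ h : G, A h c₀) = 0 := by
    apply MvPolynomial.funext
    intro l
    rw [map_zero, map_prod]
    rw [Finset.prod_congr rfl fun h _ => hA h c₀ l]
    exact hprod l
  obtain ⟨h, -, hh⟩ := Finset.prod_eq_zero_iff.mp hN
  apply hi₀
  have : ∀ l : Fin n → ℂ, MvPolynomial.eval l c₀ = 0 := by
    intro l
    have := congrArg (MvPolynomial.eval (ρ h⁻¹ l)) hh
    rw [hA, map_zero] at this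
    rwa [show ρ h (ρ h⁻¹ l) = l by
      have := key h⁻¹ l; rwa [inv_inv] at this] at this
  have : c₀ = 0 := MvPolynomial.funext fun l => by rw [this l, map_zero]
  simpa using this
end
end

section
/- Let V be a finite-dimensional complex vector space, f : C → End(V) holomorphic, and A : Ω → End(V) holomorphic on a neighborhood Ω of 0 and given by a rational function. Define Δ_z^N A(0) ∈ End(V^{⊕(N+1)}) as the N-th iterated jet (the block matrix with (i,j) entry A^{(j−i)}(0)/(j−i)! for j ≥ i and 0 otherwise). If for every N ≥ 0 the operator Δ_z^N f(0) vanishes on ker(Δ_z^N A(0)), then the meromorphic function z ↦ f(z) A(z)⁻¹ extends holomorphically to a neighborhood of 0. -/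
/-!
Let `d = det A` and let `adj A` be the adjugate, both holomorphic near `0`, with
`A * adj A = d • 1`. If `d` vanishes identically near `0`, then `A z` is invertible for no `z`
near `0`. Otherwise `d = z ^ m • u` with `u 0 ≠ 0`. For every vector `v`, the function
`A (adj A v) = d • v` vanishes to order `m` at `0`, i.e. the Taylor jet of `w = adj A v` of
length `m` lies in the kernel of `Δ_z^{m-1} A(0)`; by hypothesis it lies in the kernel of
`Δ_z^{m-1} f(0)`, which says that `f (adj A v)` vanishes to order `m`. Hence
`f * adj A = z ^ m • H` with `H` holomorphic, and `f * A⁻¹ = d⁻¹ • f * adj A = u⁻¹ • H`.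
-/

open scoped BigOperators

noncomputable section

/-- The action on jets of the `N`-th iterated jet operator `Δ_z^N A(0)`:
the block operator on `V^{⊕(N+1)}` with `(i,j)` entry `A^{(j−i)}(0)/(j−i)!` for
`j ≥ i` and `0` otherwise. -/
def jetApply {E : Type*} [NormedAddCommGroup E] [NormedSpace ℂ E]
    (N : ℕ) (A : ℂ → (E →L[ℂ] E)) (v : Fin (N + 1) → E) : Fin (N + 1) → E :=
  fun i => ∑ j : Fin (N + 1), if (i : ℕ) ≤ (j : ℕ) then
    ((((j : ℕ) - (i : ℕ)).factorial : ℂ))⁻¹ • (iteratedDeriv ((j : ℕ) - (i : ℕ)) A 0) (v j)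
  else 0

open Finset Topology

section MatrixAnalytic

variable {𝕜 F ι : Type*} [NontriviallyNormedField 𝕜] [NormedAddCommGroup F] [NormedSpace 𝕜 F]
  [Fintype ι] [DecidableEq ι] {M : F → Matrix ι ι 𝕜} {x : F}

theorem AnalyticAt.matrix_det (hM : ∀ i j, AnalyticAt 𝕜 (fun y => M y i j) x) :
    AnalyticAt 𝕜 (fun y => (M y).det) x := by
  simp only [Matrix.det_apply']
  exact Finset.analyticAt_fun_sum _ fun σ _ =>
    analyticAt_const.mul (Finset.analyticAt_fun_prod _ fun i _ => hM (σ i) i)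

theorem AnalyticAt.matrix_adjugate (hM : ∀ i j, AnalyticAt 𝕜 (fun y => M y i j) x) (i j : ι) :
    AnalyticAt 𝕜 (fun y => (M y).adjugate i j) x := by
  simp only [Matrix.adjugate_apply]
  refine AnalyticAt.matrix_det fun k l => ?_
  simp only [Matrix.updateRow_apply]
  split_ifs
  · exact analyticAt_const
  · exact hM k l

end MatrixAnalytic

theorem AnalyticAt.clm_apply {𝕜 F E G : Type*} [NontriviallyNormedField 𝕜] [NormedAddCommGroup F]
    [NormedSpace 𝕜 F] [NormedAddCommGroup E] [NormedSpace 𝕜 E] [NormedAddCommGroup G]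
    [NormedSpace 𝕜 G] {A : F → E →L[𝕜] G} {w : F → E} {x : F} (hA : AnalyticAt 𝕜 A x)
    (hw : AnalyticAt 𝕜 w x) : AnalyticAt 𝕜 (fun y => A y (w y)) x :=
  ((ContinuousLinearMap.id 𝕜 (E →L[𝕜] G)).analyticAt_bilinear (A x, w x)).comp₂ hA hw

namespace ContinuousLinearMap

variable {𝕜 E : Type*} [NontriviallyNormedField 𝕜] [NormedAddCommGroup E] [NormedSpace 𝕜 E]

/- Evaluation `T • v = T v` as a bounded action, so that the Leibniz rule
`iteratedDerivWithin_smul` applies to `z ↦ c z (w z)`. -/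
instance isScalarTower_apply : IsScalarTower 𝕜 (E →L[𝕜] E) E := ⟨fun _ _ _ => rfl⟩

instance isBoundedSMul_apply : IsBoundedSMul (E →L[𝕜] E) E :=
  .of_norm_smul_le fun T v => T.le_opNorm v

theorem iteratedDeriv_apply_const {G : Type*} [NormedAddCommGroup G] [NormedSpace 𝕜 G]
    {T : 𝕜 → E →L[𝕜] G} {z : 𝕜} {n : ℕ} (hT : ContDiffAt 𝕜 n T z) (v : E) :
    iteratedDeriv n (fun y => T y v) z = iteratedDeriv n T z v := by
  simp only [iteratedDeriv_eq_iteratedFDeriv]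
  exact congrArg (· fun _ => 1) ((apply 𝕜 G v).iteratedFDeriv_comp_left hT le_rfl)

variable [FiniteDimensional 𝕜 E]

theorem det_ne_zero_of_isUnit {T : E →L[𝕜] E} (hT : IsUnit T) : T.det ≠ 0 :=
  ((LinearMap.isUnit_iff_isUnit_det _).mp (hT.map toLinearMapRingHom)).ne_zero

variable [CompleteSpace 𝕜]

def adjugate (T : E →L[𝕜] E) : E →L[𝕜] E :=
  let b := Module.finBasis 𝕜 E
  LinearMap.toContinuousLinearMap (Matrix.toLin b b (LinearMap.toMatrix b b T).adjugate)

theorem mul_adjugate (T : E →L[𝕜] E) : T * T.adjugate = T.det • 1 := by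
  let b := Module.finBasis 𝕜 E
  apply coe_injective
  apply (LinearMap.toMatrix b b).injective
  change LinearMap.toMatrix b b ((T : E →ₗ[𝕜] E) * Matrix.toLin b b _) = _
  rw [LinearMap.toMatrix_mul, LinearMap.toMatrix_toLin, Matrix.mul_adjugate,
    LinearMap.det_toMatrix]
  simp

theorem inverse_eq_inv_det_smul_adjugate {T : E →L[𝕜] E} (hT : IsUnit T) :
    Ring.inverse T = T.det⁻¹ • T.adjugate :=
  calc Ring.inverse T = Ring.inverse T * (T * (T.det⁻¹ • T.adjugate)) := by
        rw [mul_smul_comm, mul_adjugate, smul_smul, inv_mul_cancel₀ (det_ne_zero_of_isUnit hT),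
          one_smul, mul_one]
    _ = T.det⁻¹ • T.adjugate := by rw [← mul_assoc, Ring.inverse_mul_cancel T hT, one_mul]

variable {F : Type*} [NormedAddCommGroup F] [NormedSpace 𝕜 F] {A : F → E →L[𝕜] E} {x : F}

theorem _root_.AnalyticAt.toMatrix_apply {ι : Type*} [Fintype ι] [DecidableEq ι]
    (b : Module.Basis ι 𝕜 E) (hA : AnalyticAt 𝕜 A x) (i j : ι) :
    AnalyticAt 𝕜 (fun y => LinearMap.toMatrix b b (A y) i j) x := by
  simp only [LinearMap.toMatrix_apply]
  exact (LinearMap.toContinuousLinearMap (b.coord i)).analyticAt _ |>.comp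
    (hA.clm_apply analyticAt_const)

theorem _root_.AnalyticAt.clm_det (hA : AnalyticAt 𝕜 A x) :
    AnalyticAt 𝕜 (fun y => (A y).det) x := by
  let b := Module.finBasis 𝕜 E
  simp only [← LinearMap.det_toMatrix b]
  exact AnalyticAt.matrix_det (hA.toMatrix_apply b)

theorem _root_.AnalyticAt.clm_adjugate (hA : AnalyticAt 𝕜 A x) :
    AnalyticAt 𝕜 (fun y => (A y).adjugate) x := by
  let b := Module.finBasis 𝕜 E
  let C i j := LinearMap.toContinuousLinearMap (Matrix.toLin b b (Matrix.single i j (1 : 𝕜)))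
  have h : (fun y => (A y).adjugate) =
      fun y => ∑ i, ∑ j, (LinearMap.toMatrix b b (A y)).adjugate i j • C i j := by
    ext1 y
    conv_lhs => rw [adjugate, Matrix.matrix_eq_sum_single (LinearMap.toMatrix b b (A y)).adjugate]
    simp only [C, map_sum, ← map_smul, Matrix.smul_single, smul_eq_mul, mul_one]
    rfl
  rw [h]
  refine Finset.analyticAt_fun_sum _ fun i _ => Finset.analyticAt_fun_sum _ fun j _ => ?_
  exact (AnalyticAt.matrix_adjugate (hA.toMatrix_apply b) i j).smul analyticAt_const

end ContinuousLinearMap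

theorem natCast_le_analyticOrderAt_of_forall_apply {𝕜 E G : Type*} [NontriviallyNormedField 𝕜]
    [CharZero 𝕜] [NormedAddCommGroup E] [NormedSpace 𝕜 E] [NormedAddCommGroup G]
    [NormedSpace 𝕜 G] [CompleteSpace G] {T : 𝕜 → E →L[𝕜] G} {z : 𝕜} (hT : AnalyticAt 𝕜 T z)
    {n : ℕ} (h : ∀ v, n ≤ analyticOrderAt (fun y => T y v) z) : n ≤ analyticOrderAt T z := by
  rw [natCast_le_analyticOrderAt_iff_iteratedDeriv_eq_zero hT]
  intro k hk
  ext v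
  rw [← ContinuousLinearMap.iteratedDeriv_apply_const hT.contDiffAt,
    (natCast_le_analyticOrderAt_iff_iteratedDeriv_eq_zero (hT.clm_apply analyticAt_const)).mp
      (h v) k hk]
  rfl

theorem sum_range_ite_le_sub {M : Type*} [AddCommMonoid M] (F : ℕ → ℕ → M) {i N : ℕ} (hi : i ≤ N) :
    ∑ j ∈ range (N + 1), (if i ≤ j then F (j - i) (N - j) else 0) =
      ∑ k ∈ range (N - i + 1), F k (N - i - k) := by
  rw [← sum_filter, show (range (N + 1)).filter (i ≤ ·) = Ico i (N + 1) by ext; simp; omega,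
    sum_Ico_eq_sum_range, show N + 1 - i = N - i + 1 by omega]
  refine sum_congr rfl fun k _ => ?_
  rw [Nat.add_sub_cancel_left, Nat.sub_add_eq, Nat.sub_sub, Nat.add_comm, ← Nat.sub_sub]

section TaylorCoeff

variable {X : Type*} [NormedAddCommGroup X] [NormedSpace ℂ X]

def taylorCoeff (g : ℂ → X) (n : ℕ) : X := (n.factorial : ℂ)⁻¹ • iteratedDeriv n g 0

theorem natCast_le_analyticOrderAt_iff_taylorCoeff_eq_zero [CompleteSpace X] {g : ℂ → X}
    (hg : AnalyticAt ℂ g 0) {n : ℕ} :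
    n ≤ analyticOrderAt g 0 ↔ ∀ k < n, taylorCoeff g k = 0 := by
  simp [natCast_le_analyticOrderAt_iff_iteratedDeriv_eq_zero hg, taylorCoeff,
    Nat.factorial_ne_zero]

variable {E : Type*} [NormedAddCommGroup E] [NormedSpace ℂ E] [CompleteSpace E]
  {c : ℂ → E →L[ℂ] E} {w : ℂ → E}

theorem taylorCoeff_clm_apply (hc : AnalyticAt ℂ c 0) (hw : AnalyticAt ℂ w 0) (n : ℕ) :
    taylorCoeff (fun z => c z (w z)) n =
      ∑ k ∈ range (n + 1), taylorCoeff c k (taylorCoeff w (n - k)) := by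
  have leibniz := iteratedDerivWithin_smul (Set.mem_univ 0) uniqueDiffOn_univ
    (hc.contDiffAt (n := n)).contDiffWithinAt (hw.contDiffAt (n := n)).contDiffWithinAt
  simp only [iteratedDerivWithin_univ] at leibniz
  rw [taylorCoeff, show (fun z => c z (w z)) = c • w from rfl, leibniz, smul_sum]
  refine sum_congr rfl fun k hk => ?_
  have hkn : k ≤ n := Nat.lt_succ_iff.mp (mem_range.mp hk)
  simp only [taylorCoeff, smul_apply, map_smul, smul_smul, ← Nat.cast_smul_eq_nsmul ℂ]
  congr 1
  rw [Nat.cast_choose ℂ hkn]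
  field_simp [Nat.factorial_ne_zero]

theorem jetApply_taylorCoeff (hc : AnalyticAt ℂ c 0) (hw : AnalyticAt ℂ w 0) {N : ℕ}
    (i : Fin (N + 1)) :
    jetApply N c (fun j => taylorCoeff w (N - j)) i = taylorCoeff (fun z => c z (w z)) (N - i) := by
  rw [taylorCoeff_clm_apply hc hw, jetApply, ← sum_range_ite_le_sub
    (fun k l => taylorCoeff c k (taylorCoeff w l)) (Nat.lt_succ_iff.mp i.isLt)]
  exact Fin.sum_univ_eq_sum_range
    (fun j => if (i : ℕ) ≤ j then taylorCoeff c (j - i) (taylorCoeff w (N - j)) else 0) (N + 1)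

theorem natCast_le_analyticOrderAt_apply_of_jetApply {A f : ℂ → E →L[ℂ] E}
    (hker : ∀ (N : ℕ) (v : Fin (N + 1) → E), jetApply N A v = 0 → jetApply N f v = 0)
    (hA : AnalyticAt ℂ A 0) (hf : AnalyticAt ℂ f 0) (hw : AnalyticAt ℂ w 0) {m : ℕ}
    (hm : m ≤ analyticOrderAt (fun z => A z (w z)) 0) :
    m ≤ analyticOrderAt (fun z => f z (w z)) 0 := by
  obtain _ | N := m
  · simp
  rw [natCast_le_analyticOrderAt_iff_taylorCoeff_eq_zero (hA.clm_apply hw)] at hm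
  rw [natCast_le_analyticOrderAt_iff_taylorCoeff_eq_zero (hf.clm_apply hw)]
  have hjet := hker N (fun j => taylorCoeff w (N - j)) <| funext fun i => by
    rw [jetApply_taylorCoeff hA hw]
    exact hm _ (by omega)
  intro k hk
  have := congrFun hjet ⟨N - k, by omega⟩
  rwa [jetApply_taylorCoeff hf hw, show N - (N - k) = k by omega] at this

end TaylorCoeff

theorem exists_analyticAt_eventually_eq_mul_inverse {E : Type*} [NormedAddCommGroup E]
    [NormedSpace ℂ E] [FiniteDimensional ℂ E] {f A : ℂ → E →L[ℂ] E} (hf : AnalyticAt ℂ f 0)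
    (hA : AnalyticAt ℂ A 0)
    (hker : ∀ (N : ℕ) (v : Fin (N + 1) → E), jetApply N A v = 0 → jetApply N f v = 0) :
    ∃ g : ℂ → E →L[ℂ] E, AnalyticAt ℂ g 0 ∧
      ∀ᶠ z in 𝓝 0, IsUnit (A z) → g z = f z * Ring.inverse (A z) := by
  have := FiniteDimensional.complete ℂ E
  cases hm : analyticOrderAt (fun z => (A z).det) 0 with
  | top =>
    refine ⟨0, analyticAt_const, ?_⟩
    filter_upwards [analyticOrderAt_eq_top.mp hm] with z hz hunit
    exact absurd hz (ContinuousLinearMap.det_ne_zero_of_isUnit hunit)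
  | coe m =>
    obtain ⟨u, hu, hu0, hdu⟩ := hA.clm_det.analyticOrderAt_eq_natCast.mp hm
    have hF : AnalyticAt ℂ (fun z => f z * (A z).adjugate) 0 := hf.mul hA.clm_adjugate
    have hFm : m ≤ analyticOrderAt (fun z => f z * (A z).adjugate) 0 := by
      refine natCast_le_analyticOrderAt_of_forall_apply hF fun v => ?_
      refine natCast_le_analyticOrderAt_apply_of_jetApply hker hA hf
        (hA.clm_adjugate.clm_apply analyticAt_const) ?_
      have hAadj : (fun z => A z ((A z).adjugate v)) = (fun z => (A z).det) • fun _ => v := by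
        ext1 z
        exact congrArg (· v) (A z).mul_adjugate
      rw [hAadj, analyticOrderAt_smul hA.clm_det analyticAt_const, hm]
      exact le_self_add
    obtain ⟨H, hH, hFH⟩ := (natCast_le_analyticOrderAt hF).mp hFm
    refine ⟨fun z => (u z)⁻¹ • H z, (hu.inv hu0).smul hH, ?_⟩
    filter_upwards [hdu, hFH] with z hdz hFz hunit
    have hdet := ContinuousLinearMap.det_ne_zero_of_isUnit hunit
    rw [hdz, sub_zero, smul_eq_mul] at hdet
    rw [ContinuousLinearMap.inverse_eq_inv_det_smul_adjugate hunit, mul_smul_comm, hFz, hdz,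
      smul_smul, sub_zero, smul_eq_mul, mul_inv, mul_right_comm,
      inv_mul_cancel₀ (left_ne_zero_of_mul hdet), one_mul]

theorem divide_by_rational_family_general {E : Type*} [NormedAddCommGroup E] [NormedSpace ℂ E]
    [FiniteDimensional ℂ E]
    (f : ℂ → (E →L[ℂ] E)) (hf : Differentiable ℂ f)
    (Ω : Set ℂ) (hΩ : IsOpen Ω) (h0 : (0 : ℂ) ∈ Ω)
    (A : ℂ → (E →L[ℂ] E)) (hA : DifferentiableOn ℂ A Ω)
    (hker : ∀ (N : ℕ) (v : Fin (N + 1) → E),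
      jetApply N A v = 0 → jetApply N f v = 0) :
    ∃ (U : Set ℂ) (g : ℂ → (E →L[ℂ] E)), IsOpen U ∧ (0 : ℂ) ∈ U ∧
      DifferentiableOn ℂ g U ∧
      ∀ z ∈ U, IsUnit (A z) → g z = f z * Ring.inverse (A z) := by
  have := FiniteDimensional.complete ℂ E
  obtain ⟨g, hg, hgA⟩ := exists_analyticAt_eventually_eq_mul_inverse (hf.analyticAt 0)
    (hA.analyticAt (hΩ.mem_nhds h0)) hker
  obtain ⟨U, hU, hUopen, hU0⟩ := eventually_nhds_iff.mp (hg.eventually_analyticAt.and hgA)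
  exact ⟨U, g, hUopen, hU0, fun z hz => (hU z hz).1.differentiableAt.differentiableWithinAt,
    fun z hz => (hU z hz).2⟩

/-- If `Δ_z^N f(0)` vanishes on `ker (Δ_z^N A(0))` for every `N`, where `A` is rational
and holomorphic near `0`, then `f(z) A(z)⁻¹` extends holomorphically to a
neighborhood of `0`. -/
theorem divide_by_rational_family {E : Type*} [NormedAddCommGroup E] [NormedSpace ℂ E]
    [FiniteDimensional ℂ E]
    (f : ℂ → (E →L[ℂ] E)) (hf : Differentiable ℂ f)
    (Ω : Set ℂ) (hΩ : IsOpen Ω) (h0 : (0 : ℂ) ∈ Ω)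
    (A : ℂ → (E →L[ℂ] E)) (hA : DifferentiableOn ℂ A Ω)
    (hrat : ∃ (k : ℕ) (C : Fin k → (E →L[ℂ] E)) (q : Polynomial ℂ), q ≠ 0 ∧
      ∀ z ∈ Ω, Polynomial.eval z q ≠ 0 ∧
        Polynomial.eval z q • A z = ∑ i : Fin k, z ^ (i : ℕ) • C i)
    (hker : ∀ (N : ℕ) (v : Fin (N + 1) → E),
      jetApply N A v = 0 → jetApply N f v = 0) :
    ∃ (U : Set ℂ) (g : ℂ → (E →L[ℂ] E)), IsOpen U ∧ (0 : ℂ) ∈ U ∧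
      DifferentiableOn ℂ g U ∧
      ∀ z ∈ U, IsUnit (A z) → g z = f z * Ring.inverse (A z) :=
  divide_by_rational_family_general f hf Ω hΩ h0 A hA hker
end
end

section
/- Let X = {λ ∈ Cⁿ : ‖Re λ‖ ≤ k} be a closed tube and let B = PW₀(X) be the Banach algebra of continuous functions X → C, holomorphic on the interior of X, vanishing at infinity, with the sup norm. Let rest : PW₀(X) → PW₀(X/2) be restriction to the half-size tube X/2 = {‖Re λ‖ ≤ k/2}, and let α₁ : PW₀(X/2) → PW₀(X) be (α₁ f)(λ) = f(λ/2). Then rest and α₁ are mutually inverse up to homotopy: the maps α_t ∘ rest and rest ∘ α_t given by f(λ) ↦ f(λ/(1+t)) for t ∈ [0,1] are continuous (pointwise-norm-continuous in t) paths of Banach algebra homomorphisms connecting the identity (t=0) to α₁∘rest and rest∘α₁ respectively (t=1). -/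
/-!
Each `α_t` is composition with the real dilation `λ ↦ c • λ`, `c = (1+t)⁻¹ ∈ [1/2, 1]`. A
dilation by `c > 0` maps the tube of width `k` onto the tube of width `c k`, and, being an open
map, interiors into interiors, so it preserves continuity, holomorphy and decay; this gives the
four mapping properties. For the norm continuity in `t`, split the tube at a radius `ρ`: beyond
`ρ` both `f (c • λ)` and `f (c' • λ)` are small because `f` vanishes at infinity, and inside it
`‖c • λ - c' • λ‖ ≤ |c - c'| ρ`, so uniform continuity of `f` on the compact part of the tube
applies. Finally `|(1+t)⁻¹ - (1+t₀)⁻¹| ≤ |t - t₀|` for `t, t₀ ≥ 0`.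
-/

noncomputable section

def reOf {n : ℕ} (l : Fin n → ℂ) : Fin n → ℝ := fun i => (l i).re

/-- The closed tube `X = {λ ∈ ℂⁿ : ‖Re λ‖ ≤ k}`. -/
def Tube (n : ℕ) (k : ℝ) : Set (Fin n → ℂ) := {l | ‖reOf l‖ ≤ k}

/-- Membership in the Banach algebra `PW₀(X)`: continuous on the tube, holomorphic on
its interior, vanishing at infinity. -/
def MemPW0 (n : ℕ) (k : ℝ) (f : (Fin n → ℂ) → ℂ) : Prop :=
  ContinuousOn f (Tube n k) ∧ DifferentiableOn ℂ f (interior (Tube n k)) ∧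
  ∀ ε > (0 : ℝ), ∃ R : ℝ, ∀ l ∈ Tube n k, R ≤ ‖l‖ → ‖f l‖ ≤ ε

/-- The scaling map `(α_t f)(λ) = f(λ/(1+t))`. -/
def scaleMap (n : ℕ) (t : ℝ) (f : (Fin n → ℂ) → ℂ) : (Fin n → ℂ) → ℂ :=
  fun l => f (((1 + t : ℝ) : ℂ)⁻¹ • l)

open Set Metric

lemma exists_forall_norm_comp_smul_sub_le {E F : Type*} [NormedAddCommGroup E]
    [NormedSpace ℝ E] [ProperSpace E] [NormedAddCommGroup F] {s : Set E} (hs : IsClosed s)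
    {f : E → F} (hf : ContinuousOn f s)
    (hvan : ∀ ε > (0 : ℝ), ∃ R : ℝ, ∀ x ∈ s, R ≤ ‖x‖ → ‖f x‖ ≤ ε)
    {a b : ℝ} (ha : 0 < a) {ε : ℝ} (hε : 0 < ε) :
    ∃ δ > (0 : ℝ), ∀ c ∈ Icc a b, ∀ c' ∈ Icc a b, |c - c'| < δ →
      ∀ x, c • x ∈ s → c' • x ∈ s → ‖f (c • x) - f (c' • x)‖ ≤ ε := by
  obtain ⟨R, hR⟩ := hvan (ε / 2) (half_pos hε)
  set ρ := max R 1 / a with hρ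
  have hρ_pos : 0 < ρ := div_pos (lt_max_of_lt_right one_pos) ha
  have hK : IsCompact (s ∩ closedBall 0 (b * ρ)) := (isCompact_closedBall _ _).inter_left hs
  obtain ⟨δ₁, hδ₁, hfδ₁⟩ := Metric.uniformContinuousOn_iff.1
    (hK.uniformContinuousOn_of_continuous (hf.mono inter_subset_left)) ε hε
  refine ⟨δ₁ / ρ, div_pos hδ₁ hρ_pos, ?_⟩
  rintro c ⟨hac, hcb⟩ c' ⟨hac', hc'b⟩ hcc' x hcx hc'x
  have hc : 0 ≤ c := ha.le.trans hac
  have hc' : 0 ≤ c' := ha.le.trans hac'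
  rcases le_or_gt ‖x‖ ρ with hx | hx
  · have mem_K : ∀ d, 0 ≤ d → d ≤ b → d • x ∈ s → d • x ∈ s ∩ closedBall 0 (b * ρ) :=
      fun d hd hdb hdx => ⟨hdx, by
        rw [mem_closedBall_zero_iff, norm_smul, Real.norm_of_nonneg hd]
        exact mul_le_mul hdb hx (norm_nonneg x) (hd.trans hdb)⟩
    have hdist : dist (c • x) (c' • x) < δ₁ := calc
      dist (c • x) (c' • x) = |c - c'| * ‖x‖ := by
        rw [dist_eq_norm, ← sub_smul, norm_smul, Real.norm_eq_abs]
      _ ≤ |c - c'| * ρ := mul_le_mul_of_nonneg_left hx (abs_nonneg _)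
      _ < δ₁ := (lt_div_iff₀ hρ_pos).1 hcc'
    rw [← dist_eq_norm]
    exact (hfδ₁ _ (mem_K c hc hcb hcx) _ (mem_K c' hc' hc'b hc'x) hdist).le
  · have small : ∀ d, a ≤ d → d • x ∈ s → ‖f (d • x)‖ ≤ ε / 2 := fun d had hdx =>
      hR _ hdx <| calc
        R ≤ a * ρ := by rw [hρ, mul_div_cancel₀ _ ha.ne']; exact le_max_left R 1
        _ ≤ d * ‖x‖ := mul_le_mul had hx.le hρ_pos.le (ha.le.trans had)
        _ = ‖d • x‖ := by rw [norm_smul, Real.norm_of_nonneg (ha.le.trans had)]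
    calc ‖f (c • x) - f (c' • x)‖ ≤ ‖f (c • x)‖ + ‖f (c' • x)‖ := norm_sub_le _ _
      _ ≤ ε := by linarith [small c hac hcx, small c' hac' hc'x]

lemma abs_inv_one_add_sub_inv_one_add_le {t t₀ : ℝ} (ht : 0 ≤ t) (ht₀ : 0 ≤ t₀) :
    |(1 + t)⁻¹ - (1 + t₀)⁻¹| ≤ |t - t₀| := by
  have h : (1 + t)⁻¹ - (1 + t₀)⁻¹ = (t₀ - t) / ((1 + t) * (1 + t₀)) := by
    field_simp
    ring
  rw [h, abs_div, abs_sub_comm, abs_of_pos (by positivity : 0 < (1 + t) * (1 + t₀))]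
  exact div_le_self (abs_nonneg _) (by nlinarith)

lemma inv_one_add_mem_Icc {t : ℝ} (ht : t ∈ Icc (0 : ℝ) 1) : (1 + t)⁻¹ ∈ Icc (1 / 2 : ℝ) 1 := by
  obtain ⟨ht0, ht1⟩ := ht
  refine ⟨?_, inv_le_one_of_one_le₀ (by linarith)⟩
  rw [one_div]
  exact inv_anti₀ (by linarith) (by linarith)

section Tube

variable {n : ℕ}

lemma continuous_reOf : Continuous (reOf (n := n)) :=
  continuous_pi fun i => Complex.continuous_re.comp (continuous_apply i)

lemma reOf_smul (c : ℝ) (l : Fin n → ℂ) : reOf (c • l) = c • reOf l := by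
  funext i
  simp [reOf]

lemma isClosed_tube (k : ℝ) : IsClosed (Tube n k) :=
  isClosed_le continuous_reOf.norm continuous_const

lemma tube_mono {k k' : ℝ} (h : k ≤ k') : Tube n k ⊆ Tube n k' :=
  fun _ hl => le_trans hl h

lemma smul_mem_tube {k k' c : ℝ} (hc : 0 ≤ c) (h : c * k ≤ k') {l : Fin n → ℂ}
    (hl : l ∈ Tube n k) : c • l ∈ Tube n k' := by
  change ‖reOf (c • l)‖ ≤ k'
  rw [reOf_smul, norm_smul, Real.norm_of_nonneg hc]
  exact (mul_le_mul_of_nonneg_left hl hc).trans h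

lemma scaleMap_eq_comp_smul (t : ℝ) (f : (Fin n → ℂ) → ℂ) :
    scaleMap n t f = fun l => f ((1 + t)⁻¹ • l) := by
  funext l
  rw [scaleMap, ← Complex.ofReal_inv, Complex.coe_smul]

end Tube

namespace MemPW0

variable {n : ℕ} {f : (Fin n → ℂ) → ℂ}

lemma mono {k k' : ℝ} (h : k' ≤ k) (hf : MemPW0 n k f) : MemPW0 n k' f := by
  obtain ⟨hcont, hdiff, hvan⟩ := hf
  refine ⟨hcont.mono (tube_mono h), hdiff.mono (interior_mono (tube_mono h)), fun ε hε => ?_⟩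
  obtain ⟨R, hR⟩ := hvan ε hε
  exact ⟨R, fun l hl => hR l (tube_mono h hl)⟩

lemma comp_smul {k k' c : ℝ} (hc : 0 < c) (h : c * k' ≤ k) (hf : MemPW0 n k f) :
    MemPW0 n k' (fun l => f (c • l)) := by
  obtain ⟨hcont, hdiff, hvan⟩ := hf
  have hmaps : MapsTo (fun l : Fin n → ℂ => c • l) (Tube n k') (Tube n k) :=
    fun _ hl => smul_mem_tube hc.le h hl
  refine ⟨hcont.comp (continuous_const_smul c).continuousOn hmaps,
    hdiff.comp (differentiable_id.const_smul c).differentiableOn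
      ((isOpenMap_smul₀ hc.ne').mapsTo_interior hmaps), fun ε hε => ?_⟩
  obtain ⟨R, hR⟩ := hvan ε hε
  refine ⟨R / c, fun l hl hRl => hR _ (hmaps hl) ?_⟩
  rw [norm_smul, Real.norm_of_nonneg hc.le, mul_comm]
  exact (div_le_iff₀ hc).1 hRl

lemma scaleMap {k k' t : ℝ} (ht : -1 < t) (h : k' ≤ (1 + t) * k) (hf : MemPW0 n k f) :
    MemPW0 n k' (scaleMap n t f) := by
  have h1t : 0 < 1 + t := by linarith
  rw [scaleMap_eq_comp_smul]
  refine hf.comp_smul (inv_pos.2 h1t) ?_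
  rw [inv_mul_le_iff₀ h1t]
  exact h

end MemPW0

/-- Restriction to the half-size tube and the scaling `α₁ f = f(·/2)` are mutually
inverse up to homotopy through the Banach algebra homomorphisms `f ↦ f(·/(1+t))`,
`t ∈ [0,1]`, which are norm-continuous in `t`. -/
theorem pw0_tube_homotopy (n : ℕ) (k : ℝ) (hk : 0 < k) :
    -- restriction maps PW₀(X) to PW₀(X/2)
    (∀ f, MemPW0 n k f → MemPW0 n (k / 2) f) ∧
    -- α₁ maps PW₀(X/2) to PW₀(X)
    (∀ f, MemPW0 n (k / 2) f → MemPW0 n k (scaleMap n 1 f)) ∧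
    -- α_t ∘ rest is an endomorphism of PW₀(X) for each t ∈ [0,1]
    (∀ t ∈ Set.Icc (0 : ℝ) 1, ∀ f, MemPW0 n k f → MemPW0 n k (scaleMap n t f)) ∧
    -- rest ∘ α_t is an endomorphism of PW₀(X/2) for each t ∈ [0,1]
    (∀ t ∈ Set.Icc (0 : ℝ) 1, ∀ f, MemPW0 n (k / 2) f →
      MemPW0 n (k / 2) (scaleMap n t f)) ∧
    -- each α_t is an algebra homomorphism
    (∀ (t : ℝ) (f g : (Fin n → ℂ) → ℂ),
      scaleMap n t (fun l => f l * g l) = fun l => scaleMap n t f l * scaleMap n t g l) ∧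
    -- at t = 0 the homotopy is the identity
    (∀ f : (Fin n → ℂ) → ℂ, scaleMap n 0 f = f) ∧
    -- the homotopy is pointwise norm-continuous in t (in the sup norm over the tube)
    (∀ f, MemPW0 n k f → ∀ ε > (0 : ℝ), ∀ t₀ ∈ Set.Icc (0 : ℝ) 1, ∃ δ > (0 : ℝ),
      ∀ t ∈ Set.Icc (0 : ℝ) 1, |t - t₀| < δ →
        ∀ l ∈ Tube n k, ‖scaleMap n t f l - scaleMap n t₀ f l‖ ≤ ε) := by
  have scaleMap_endo : ∀ k' ≥ (0 : ℝ), ∀ t ∈ Icc (0 : ℝ) 1, ∀ f, MemPW0 n k' f →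
      MemPW0 n k' (scaleMap n t f) := fun k' hk' t ht _ hf =>
    hf.scaleMap (by linarith [ht.1]) (le_mul_of_one_le_left hk' (by linarith [ht.1]))
  refine ⟨fun f hf => hf.mono (by linarith), fun f hf => hf.scaleMap (by norm_num) (by linarith),
    scaleMap_endo k hk.le, scaleMap_endo (k / 2) (by linarith), fun _ _ _ => rfl,
    fun f => by simp [scaleMap_eq_comp_smul], ?_⟩
  intro f hf ε hε t₀ ht₀
  obtain ⟨δ, hδ, hfδ⟩ := exists_forall_norm_comp_smul_sub_le (isClosed_tube k) hf.1 hf.2.2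
    (a := 1 / 2) (b := 1) (by norm_num) hε
  have hc_tube : ∀ t ∈ Icc (0 : ℝ) 1, ∀ l ∈ Tube n k, (1 + t)⁻¹ • l ∈ Tube n k :=
    fun t ht _ hl => smul_mem_tube (by linarith [(inv_one_add_mem_Icc ht).1])
      (mul_le_of_le_one_left hk.le (inv_one_add_mem_Icc ht).2) hl
  refine ⟨δ, hδ, fun t ht htt₀ l hl => ?_⟩
  rw [scaleMap_eq_comp_smul, scaleMap_eq_comp_smul]
  exact hfδ _ (inv_one_add_mem_Icc ht) _ (inv_one_add_mem_Icc ht₀)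
    ((abs_inv_one_add_sub_inv_one_add_le ht.1 ht₀.1).trans_lt htt₀) l
    (hc_tube t ht l hl) (hc_tube t₀ ht₀ l hl)
end
end

section
/- Let f : Cⁿ → C be entire with sup_{‖Re λ‖ ≤ k}(1+|λ|)^M |f(λ)| < ∞ for all M, k, let t > 0, and set φ_t(λ) = (πt)^{n/2} e^{tλ²} with λ² = Σλᵢ². Then h_t(λ) = ∫_{iRⁿ} f(x) φ_t(λ − x) dx converges absolutely for every λ ∈ Cⁿ, defines an entire function of λ, and for every M, k one has sup_{‖Re λ‖ ≤ k}(1+|λ|)^M |h_t(λ)| < ∞; that is, h_t ∈ PW(Cⁿ). -/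
/-! The Gaussian `gaussKer n t` is itself a Paley–Wiener function: on a tube `‖Re μ‖ ≤ k` its
modulus is `e^{t Σ (Re μᵢ)² - t Σ (Im μᵢ)²}`, and the Gaussian decay in `Im μ` beats every
polynomial. So it suffices that the convolution along `iℝⁿ` of two Paley–Wiener functions is
Paley–Wiener. The inequality `(1 + |λ|)^N ≤ (1 + |x|)^N (1 + |λ - x|)^N` splits the weight between
the two factors; `f` decays on `iℝⁿ` faster than the integrable `(1 + |x|)^{-(n+1)}`, and the second
factor is bounded on every tube. The same domination, with Cauchy's estimate bounding the derivative
of the second factor on tubes, justifies differentiating under the integral. -/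

open MeasureTheory

noncomputable section

def IsPW {n : ℕ} (f : (Fin n → ℂ) → ℂ) : Prop :=
  Differentiable ℂ f ∧ ∀ (N : ℕ) (k : ℝ), ∃ C : ℝ, ∀ l : Fin n → ℂ,
    ‖reOf l‖ ≤ k → (1 + ‖l‖) ^ N * ‖f l‖ ≤ C

def qform {n : ℕ} (l : Fin n → ℂ) : ℂ := ∑ i, (l i) ^ 2

def iVec {n : ℕ} (x : Fin n → ℝ) : Fin n → ℂ := fun i => Complex.I * (x i : ℂ)

def gaussKer (n : ℕ) (t : ℝ) (l : Fin n → ℂ) : ℂ :=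
  (((Real.pi * t) ^ ((n : ℝ) / 2) : ℝ) : ℂ) * Complex.exp ((t : ℂ) * qform l)

theorem one_add_norm_pow_le {E : Type*} [SeminormedAddGroup E] (a b : E) (N : ℕ) :
    (1 + ‖a‖) ^ N ≤ (1 + ‖b‖) ^ N * (1 + ‖a - b‖) ^ N := by
  rw [← mul_pow]
  gcongr
  nlinarith [norm_le_norm_add_norm_sub' a b, norm_nonneg b, norm_nonneg (a - b)]

theorem integrable_inv_one_add_norm_pow {E : Type*} [NormedAddCommGroup E] [NormedSpace ℝ E]
    [FiniteDimensional ℝ E] [MeasurableSpace E] [BorelSpace E] (μ : Measure E)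
    [μ.IsAddHaarMeasure] {N : ℕ} (hN : Module.finrank ℝ E < N) :
    Integrable (fun x : E => ((1 + ‖x‖) ^ N)⁻¹) μ := by
  refine (integrable_one_add_norm (μ := μ) (r := N) (by exact_mod_cast hN)).congr
    (ae_of_all _ fun x => ?_)
  simp [Real.rpow_neg (by positivity : (0 : ℝ) ≤ 1 + ‖x‖)]

theorem norm_le_sum_norm {ι : Type*} [Fintype ι] {E : ι → Type*}
    [∀ i, SeminormedAddCommGroup (E i)] (x : ∀ i, E i) : ‖x‖ ≤ ∑ i, ‖x i‖ :=
  pi_norm_le_iff_of_nonneg (Finset.sum_nonneg fun _ _ => norm_nonneg _) |>.2 fun i =>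
    Finset.single_le_sum (fun j _ => norm_nonneg (x j)) (Finset.mem_univ i)

section Coordinates

variable {n : ℕ}

theorem norm_iVec (x : Fin n → ℝ) : ‖iVec x‖ = ‖x‖ := by
  simp only [Pi.norm_def]
  congr 1
  exact Finset.sup_congr rfl fun i _ => by simp [iVec, nnnorm_mul]

theorem reOf_iVec (x : Fin n → ℝ) : reOf (iVec x) = 0 := by
  funext i
  simp [reOf, iVec]

theorem reOf_sub_iVec (l : Fin n → ℂ) (x : Fin n → ℝ) : reOf (l - iVec x) = reOf l := by
  funext i
  simp [reOf, iVec]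

@[fun_prop]
theorem continuous_iVec : Continuous (iVec (n := n)) := by
  unfold iVec
  fun_prop

theorem norm_reOf_le (l : Fin n → ℂ) : ‖reOf l‖ ≤ ‖l‖ :=
  pi_norm_le_iff_of_nonneg (norm_nonneg l) |>.2 fun i =>
    (Complex.abs_re_le_norm (l i)).trans (norm_le_pi_norm l i)

theorem norm_reOf_le_add (l l₀ : Fin n → ℂ) : ‖reOf l‖ ≤ ‖reOf l₀‖ + ‖l - l₀‖ := by
  have : reOf l = reOf l₀ + reOf (l - l₀) := by
    funext i
    simp [reOf]
  rw [this]
  exact (norm_add_le _ _).trans (add_le_add le_rfl (norm_reOf_le _))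

end Coordinates

namespace IsPW

variable {n : ℕ} {f : (Fin n → ℂ) → ℂ}

theorem exists_bound (hf : IsPW f) (k : ℝ) : ∃ C, ∀ l, ‖reOf l‖ ≤ k → ‖f l‖ ≤ C := by
  obtain ⟨C, hC⟩ := hf.2 0 k
  exact ⟨C, fun l hl => by simpa using hC l hl⟩

theorem exists_bound_imag (hf : IsPW f) (N M : ℕ) :
    ∃ C, ∀ x : Fin n → ℝ, (1 + ‖x‖) ^ N * ‖f (iVec x)‖ ≤ C * ((1 + ‖x‖) ^ M)⁻¹ := by
  obtain ⟨C, hC⟩ := hf.2 (N + M) 0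
  refine ⟨C, fun x => ?_⟩
  have h := hC (iVec x) (by simp [reOf_iVec])
  rw [norm_iVec, pow_add] at h
  rw [← div_eq_mul_inv, le_div_iff₀ (by positivity)]
  linarith

/-- Cauchy's estimate on the discs `z ↦ l + z • v`, `‖v‖ = 1`, which stay in a wider tube. -/
theorem exists_bound_fderiv (hf : IsPW f) (k : ℝ) :
    ∃ D, ∀ l, ‖reOf l‖ ≤ k → ‖fderiv ℂ f l‖ ≤ D := by
  obtain ⟨C, hC⟩ := hf.exists_bound (k + 1)
  refine ⟨C, fun l hl => ?_⟩
  refine ContinuousLinearMap.opNorm_le_of_unit_norm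
    ((norm_nonneg _).trans (hC l (by linarith))) fun v hv => ?_
  have hline : HasDerivAt (fun z : ℂ => l + z • v) v 0 := by
    simpa using ((hasDerivAt_id (0 : ℂ)).smul_const v).const_add l
  have hderiv : deriv (fun z : ℂ => f (l + z • v)) 0 = fderiv ℂ f l v := by
    have h := (hf.1 (l + (0 : ℂ) • v)).hasFDerivAt.comp_hasDerivAt (0 : ℂ) hline
    rw [zero_smul, add_zero] at h
    exact h.deriv
  rw [← hderiv, ← div_one C]
  refine Complex.norm_deriv_le_of_forall_mem_sphere_norm_le one_pos
    (hf.1.comp (by fun_prop)).diffContOnCl fun z hz => hC _ ?_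
  have hdist : ‖l + z • v - l‖ = 1 := by
    rw [mem_sphere_zero_iff_norm] at hz
    simp [norm_smul, hz, hv]
  linarith [norm_reOf_le_add (l + z • v) l]

end IsPW

section ImagConv

variable {n : ℕ} {f g : (Fin n → ℂ) → ℂ}

def imagConv (f g : (Fin n → ℂ) → ℂ) (l : Fin n → ℂ) : ℂ :=
  ∫ x : Fin n → ℝ, f (iVec x) * g (l - iVec x)

theorem integrable_imagConv_integrand (hf : IsPW f) (hg : IsPW g) (l : Fin n → ℂ) :
    Integrable (fun x : Fin n → ℝ => f (iVec x) * g (l - iVec x)) := by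
  obtain ⟨C, hC⟩ := hf.exists_bound_imag 0 (n + 1)
  obtain ⟨B, hB⟩ := hg.exists_bound ‖reOf l‖
  have hcont : Continuous fun x : Fin n → ℝ => f (iVec x) * g (l - iVec x) := by
    have := hf.1.continuous
    have := hg.1.continuous
    fun_prop
  refine ((integrable_inv_one_add_norm_pow volume (N := n + 1) (by simp)).const_mul C
    |>.mul_const B).mono' hcont.aestronglyMeasurable (ae_of_all _ fun x => ?_)
  exact norm_mul_le_of_le (by simpa using hC x) (hB _ (by rw [reOf_sub_iVec]))

theorem hasFDerivAt_imagConv (hf : IsPW f) (hg : IsPW g) (l₀ : Fin n → ℂ) :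
    HasFDerivAt (imagConv f g) (∫ x : Fin n → ℝ, f (iVec x) • fderiv ℂ g (l₀ - iVec x)) l₀ := by
  obtain ⟨C, hC⟩ := hf.exists_bound_imag 0 (n + 1)
  obtain ⟨D, hD⟩ := hg.exists_bound_fderiv (‖reOf l₀‖ + 1)
  have hf_cont : Continuous fun x : Fin n → ℝ => f (iVec x) :=
    hf.1.continuous.comp continuous_iVec
  have hF'_meas : AEStronglyMeasurable
      (fun x : Fin n → ℝ => f (iVec x) • fderiv ℂ g (l₀ - iVec x)) volume :=
    hf_cont.aestronglyMeasurable.smul ((measurable_fderiv ℂ g).comp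
      (measurable_const.sub continuous_iVec.measurable)).aestronglyMeasurable
  refine hasFDerivAt_integral_of_dominated_of_fderiv_le
    (F' := fun l x => f (iVec x) • fderiv ℂ g (l - iVec x)) (Metric.ball_mem_nhds l₀ one_pos)
    (.of_forall fun l => (integrable_imagConv_integrand hf hg l).aestronglyMeasurable)
    (integrable_imagConv_integrand hf hg l₀) hF'_meas (ae_of_all _ fun x l hl => ?_)
    ((integrable_inv_one_add_norm_pow volume (N := n + 1) (by simp)).const_mul C |>.mul_const D)
    (ae_of_all _ fun x l _ => ?_)
  · have hfx : ‖f (iVec x)‖ ≤ C * ((1 + ‖x‖) ^ (n + 1))⁻¹ := by simpa using hC x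
    rw [norm_smul]
    refine mul_le_mul hfx (hD _ ?_) (norm_nonneg _) ((norm_nonneg _).trans hfx)
    rw [reOf_sub_iVec]
    have := norm_reOf_le_add l l₀
    have := mem_ball_iff_norm.1 hl
    linarith
  · exact ((hg.1 _).hasFDerivAt.comp l (hasFDerivAt_sub_const _)).const_mul (f (iVec x))

theorem isPW_imagConv (hf : IsPW f) (hg : IsPW g) : IsPW (imagConv f g) := by
  refine ⟨fun l => (hasFDerivAt_imagConv hf hg l).differentiableAt, fun N k => ?_⟩
  obtain ⟨C, hC⟩ := hf.exists_bound_imag N (n + 1)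
  obtain ⟨B, hB⟩ := hg.2 N k
  have hw := integrable_inv_one_add_norm_pow (volume : Measure (Fin n → ℝ)) (N := n + 1) (by simp)
  refine ⟨C * B * ∫ x : Fin n → ℝ, ((1 + ‖x‖) ^ (n + 1))⁻¹, fun l hl => ?_⟩
  have hpt : ∀ x : Fin n → ℝ, (1 + ‖l‖) ^ N * ‖f (iVec x) * g (l - iVec x)‖ ≤
      C * B * ((1 + ‖x‖) ^ (n + 1))⁻¹ := fun x => by
    have hsplit := one_add_norm_pow_le l (iVec x) N
    rw [norm_iVec] at hsplit
    have hgx := hB (l - iVec x) (by rwa [reOf_sub_iVec])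
    calc (1 + ‖l‖) ^ N * ‖f (iVec x) * g (l - iVec x)‖
        ≤ ((1 + ‖x‖) ^ N * ‖f (iVec x)‖) * ((1 + ‖l - iVec x‖) ^ N * ‖g (l - iVec x)‖) := by
          rw [norm_mul, mul_mul_mul_comm]
          gcongr
      _ ≤ C * ((1 + ‖x‖) ^ (n + 1))⁻¹ * B :=
          mul_le_mul (hC x) hgx (by positivity) ((by positivity : (0:ℝ) ≤ _).trans (hC x))
      _ = C * B * ((1 + ‖x‖) ^ (n + 1))⁻¹ := by ring
  calc (1 + ‖l‖) ^ N * ‖imagConv f g l‖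
      ≤ (1 + ‖l‖) ^ N * ∫ x : Fin n → ℝ, ‖f (iVec x) * g (l - iVec x)‖ := by
        gcongr
        exact norm_integral_le_integral_norm _
    _ = ∫ x : Fin n → ℝ, (1 + ‖l‖) ^ N * ‖f (iVec x) * g (l - iVec x)‖ :=
        (integral_const_mul _ _).symm
    _ ≤ ∫ x : Fin n → ℝ, C * B * ((1 + ‖x‖) ^ (n + 1))⁻¹ :=
        integral_mono ((integrable_imagConv_integrand hf hg l).norm.const_mul _)
          (hw.const_mul _) hpt
    _ = C * B * ∫ x : Fin n → ℝ, ((1 + ‖x‖) ^ (n + 1))⁻¹ := integral_const_mul _ _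

end ImagConv

section Gaussian

variable {n : ℕ} {t : ℝ}

theorem re_qform (μ : Fin n → ℂ) : (qform μ).re = ∑ i, ((μ i).re ^ 2 - (μ i).im ^ 2) := by
  simp [qform, Complex.re_sum, pow_two, Complex.mul_re]

theorem norm_gaussKer (μ : Fin n → ℂ) :
    ‖gaussKer n t μ‖ = |(Real.pi * t) ^ ((n : ℝ) / 2)| * Real.exp (t * (qform μ).re) := by
  simp [gaussKer, Complex.norm_exp, Complex.mul_re]

/-- Per coordinate, the Gaussian factor `e^{-t (Im μᵢ)²}` absorbs `e^{N |Im μᵢ|}`. -/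
theorem one_add_norm_pow_mul_norm_gaussKer_le (ht : 0 < t) (N : ℕ) {k : ℝ} {μ : Fin n → ℂ}
    (hμ : ‖reOf μ‖ ≤ k) :
    (1 + ‖μ‖) ^ N * ‖gaussKer n t μ‖ ≤
      |(Real.pi * t) ^ ((n : ℝ) / 2)| * Real.exp (n * (N * k + t * k ^ 2 + N ^ 2 / (4 * t))) := by
  have hcoord : ∀ i, N * ‖μ i‖ + t * ((μ i).re ^ 2 - (μ i).im ^ 2) ≤
      N * k + t * k ^ 2 + N ^ 2 / (4 * t) := fun i => by
    have hre : |(μ i).re| ≤ k := (norm_le_pi_norm (reOf μ) i).trans hμ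
    have hsquare : N * |(μ i).im| - t * (μ i).im ^ 2 ≤ N ^ 2 / (4 * t) := by
      rw [← sq_abs, le_div_iff₀ (by positivity)]
      nlinarith [sq_nonneg (N - 2 * t * |(μ i).im|)]
    have hre_sq : (μ i).re ^ 2 ≤ k ^ 2 := by
      rw [← sq_abs]
      exact pow_le_pow_left₀ (abs_nonneg _) hre 2
    nlinarith [Complex.norm_le_abs_re_add_abs_im (μ i)]
  have hexponent : N * ‖μ‖ + t * (qform μ).re ≤ n * (N * k + t * k ^ 2 + N ^ 2 / (4 * t)) :=
    calc N * ‖μ‖ + t * (qform μ).re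
        ≤ ∑ i, (N * ‖μ i‖ + t * ((μ i).re ^ 2 - (μ i).im ^ 2)) := by
          rw [Finset.sum_add_distrib, ← Finset.mul_sum, ← Finset.mul_sum, re_qform]
          gcongr
          exact norm_le_sum_norm μ
      _ ≤ ∑ _i : Fin n, (N * k + t * k ^ 2 + N ^ 2 / (4 * t)) :=
          Finset.sum_le_sum fun i _ => hcoord i
      _ = n * (N * k + t * k ^ 2 + N ^ 2 / (4 * t)) := by
          rw [Finset.sum_const, Finset.card_univ, Fintype.card_fin, nsmul_eq_mul]
  calc (1 + ‖μ‖) ^ N * ‖gaussKer n t μ‖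
      ≤ Real.exp ‖μ‖ ^ N * (|(Real.pi * t) ^ ((n : ℝ) / 2)| * Real.exp (t * (qform μ).re)) := by
        rw [norm_gaussKer]
        gcongr
        linarith [Real.add_one_le_exp ‖μ‖]
    _ = |(Real.pi * t) ^ ((n : ℝ) / 2)| * Real.exp (N * ‖μ‖ + t * (qform μ).re) := by
        rw [Real.exp_add, ← Real.exp_nat_mul]
        ring
    _ ≤ _ := by gcongr

theorem isPW_gaussKer (ht : 0 < t) : IsPW (gaussKer n t) :=
  ⟨by unfold gaussKer qform; fun_prop,
    fun N _ => ⟨_, fun _ hμ => one_add_norm_pow_mul_norm_gaussKer_le ht N hμ⟩⟩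

end Gaussian

/-- The Gaussian mollification `h_t(λ) = ∫_{iℝⁿ} f(x) φ_t(λ−x) dx` of a Paley–Wiener
function converges absolutely, is entire in `λ`, and lies in `PW(ℂⁿ)`. -/
theorem gaussian_mollification_pw (n : ℕ) (f : (Fin n → ℂ) → ℂ) (hf : IsPW f)
    (t : ℝ) (ht : 0 < t) :
    (∀ l : Fin n → ℂ,
      Integrable (fun x : Fin n → ℝ => f (iVec x) * gaussKer n t (l - iVec x))) ∧
    Differentiable ℂ
      (fun l : Fin n → ℂ => ∫ x : Fin n → ℝ, f (iVec x) * gaussKer n t (l - iVec x)) ∧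
    IsPW (fun l : Fin n → ℂ => ∫ x : Fin n → ℝ, f (iVec x) * gaussKer n t (l - iVec x)) := by
  have hg := isPW_gaussKer (n := n) ht
  exact ⟨integrable_imagConv_integrand hf hg, (isPW_imagConv hf hg).1, isPW_imagConv hf hg⟩
end
end
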